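/- For a Lie group G, the affine group Aff(G) = G ⋊ Aut(G), acting on G by g ↦ a·φ(g), is precisely the normalizer of the left-translation action of G inside the group Diff(G) of diffeomorphisms of G. -/

import Mathlib

open Manifold

/-!
If `f` conjugates every left translation `L_g` into a left translation `L_{g'}`, then evaluating
`f ∘ L_g = L_{g'} ∘ f` at `1` gives `g' = f g * (f 1)⁻¹`, so `f (g * y) = f g * (f 1)⁻¹ * f y`;
that is, `x ↦ (f 1)⁻¹ * f x` is a group automorphism, smooth with smooth inverse because
`f` and left translations are. Conversely an affine map `x ↦ a * φ x` conjugates `L_g` into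
`L_{a * φ g * a⁻¹}`, and its inverse `x ↦ φ⁻¹ a⁻¹ * φ⁻¹ x` is again affine.
-/

namespace Equiv

variable {G : Type*} [Group G]

theorem apply_mul_of_conj_mulLeft (f : G ≃ G)
    (hf : ∀ g : G, ∃ g' : G, ∀ x : G, f (g * f.symm x) = g' * x) (g y : G) :
    f (g * y) = f g * (f 1)⁻¹ * f y := by
  obtain ⟨g', hg'⟩ := hf g
  have hg : f g = g' * f 1 := by simpa using hg' (f 1)
  have hgy : f (g * y) = g' * f y := by simpa using hg' (f y)
  rw [hgy, hg, mul_inv_cancel_right]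

def toMulEquivOfConjMulLeft (f : G ≃ G)
    (hf : ∀ g : G, ∃ g' : G, ∀ x : G, f (g * f.symm x) = g' * x) : G ≃* G :=
  { f.trans (Equiv.mulLeft (f 1)⁻¹) with
    map_mul' := fun x y => by
      simp only [toFun_as_coe, coe_trans, Function.comp_apply, coe_mulLeft,
        apply_mul_of_conj_mulLeft f hf x y]
      group }

theorem conj_mulLeft_of_affine (f : G ≃ G) (a : G) (φ : G ≃* G) (hf : ∀ x, f x = a * φ x)
    (g x : G) : f (g * f.symm x) = a * φ g * a⁻¹ * x := by
  conv_rhs => rw [← f.apply_symm_apply x, hf (f.symm x)]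
  rw [hf, map_mul]
  group

theorem symm_apply_of_affine (f : G ≃ G) (a : G) (φ : G ≃* G) (hf : ∀ x, f x = a * φ x)
    (x : G) : f.symm x = φ.symm a⁻¹ * φ.symm x := by
  rw [f.symm_apply_eq, hf, ← map_mul, MulEquiv.apply_symm_apply, mul_inv_cancel_left]

end Equiv

/-- For a Lie group `G`, a diffeomorphism `f` of `G` normalizes the
subgroup of left translations inside the group of diffeomorphisms of `G` if and only if
it is an affine transformation, i.e. of the form `x ↦ a * φ x` for some `a ∈ G` and some
Lie group automorphism `φ` of `G`.  In other words, `Aff(G) = G ⋊ Aut(G)` is precisely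
the normalizer of the left-translation action of `G` in `Diff(G)`. -/
theorem stmt_0
    {E : Type*} [NormedAddCommGroup E] [NormedSpace ℝ E]
    {H : Type*} [TopologicalSpace H] (I : ModelWithCorners ℝ E H)
    {G : Type*} [TopologicalSpace G] [ChartedSpace H G] [Group G] [LieGroup I (⊤ : ℕ∞) G]
    (f : Diffeomorph I I G G (⊤ : ℕ∞)) :
    ((∀ g : G, ∃ g' : G, ∀ x : G, f (g * f.symm x) = g' * x) ∧
      (∀ g : G, ∃ g' : G, ∀ x : G, f.symm (g * f x) = g' * x)) ↔
    ∃ (a : G) (φ : G ≃* G), ContMDiff I I (⊤ : ℕ∞) ⇑φ ∧ ContMDiff I I (⊤ : ℕ∞) ⇑φ.symm ∧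
      ∀ x : G, f x = a * φ x := by
  constructor
  · rintro ⟨hconj, -⟩
    exact ⟨f 1, f.toEquiv.toMulEquivOfConjMulLeft hconj,
      contMDiff_mul_left.comp f.contMDiff, f.symm.contMDiff.comp contMDiff_mul_left,
      fun x => (mul_inv_cancel_left (f 1) (f x)).symm⟩
  · rintro ⟨a, φ, -, -, hf⟩
    have hf_symm := f.toEquiv.symm_apply_of_affine a φ hf
    exact ⟨fun g => ⟨_, f.toEquiv.conj_mulLeft_of_affine a φ hf g⟩,
      fun g => ⟨_, f.toEquiv.symm.conj_mulLeft_of_affine _ φ.symm hf_symm g⟩⟩
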